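/- Let D ⊆ ℝⁿ (n ≥ 2) be open, let w : D → ℝ be C² with Δw = 0 and ∇w(x) ≠ 0 for all x ∈ D, let f : ℝ → ℝ be C² with f'(t) > 0 for all t, and let F : [0,∞) → ℝ be C² with F'(t) > 0 and F''(t) > 0 for t > 0; set H(t) = F'(t)/t. Then at every point x ∈ D, the inequality div(H(|∇(f∘w)|)∇(f∘w))(x) ≥ 0 holds if and only if f''(w(x)) ≥ ( F'(f'(w(x))|∇w(x)|)/F''(f'(w(x))|∇w(x)|) − f'(w(x))|∇w(x)| ) · |∇w(x)|^{-5} · Δ_∞ w(x). -/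

import Mathlib

/-!
Since `∇(f ∘ w) = f'(w) ∇w` with `f' > 0`, the field is `φ ∇w` with
`φ = H(f'(w)|∇w|) f'(w)`. As `w` is harmonic, its divergence is `⟨∇φ, ∇w⟩`, and the derivative
of `|∇w|` in the direction `∇w` is `Δ_∞ w / |∇w|`. With `t = f'(w)|∇w|` and
`H'(t) = (t F''(t) - F'(t)) / t²` this gives
`Δ_H (f ∘ w) = F''(t) |∇w|² (f''(w) - (F'(t)/F''(t) - t) |∇w|⁻⁵ Δ_∞ w)`,
and `F''(t) > 0` turns the sign condition into the stated inequality.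
-/

open Set Filter MeasureTheory
open scoped RealInnerProductSpace Topology
noncomputable section

/-- The Laplacian of a scalar function on `ℝⁿ`, as sum of pure second derivatives. -/
def laplacian {n : ℕ} (u : EuclideanSpace ℝ (Fin n) → ℝ) (x : EuclideanSpace ℝ (Fin n)) : ℝ :=
  ∑ i, fderiv ℝ (fun y => fderiv ℝ u y (EuclideanSpace.single i 1)) x (EuclideanSpace.single i 1)

/-- The divergence of a vector field on `ℝⁿ`. -/
def divergence {n : ℕ} (X : EuclideanSpace ℝ (Fin n) → EuclideanSpace ℝ (Fin n))
    (x : EuclideanSpace ℝ (Fin n)) : ℝ :=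
  ∑ i, fderiv ℝ X x (EuclideanSpace.single i 1) i

/-- The `∞`-Laplacian `Δ_∞ u = ⟨∇u, (D²u) ∇u⟩`. -/
def inftyLaplacian {n : ℕ} (u : EuclideanSpace ℝ (Fin n) → ℝ)
    (x : EuclideanSpace ℝ (Fin n)) : ℝ :=
  ⟪gradient u x, fderiv ℝ (gradient u) x (gradient u x)⟫

/-- `H(t) = F'(t)/t`. -/
def Hfun (F : ℝ → ℝ) : ℝ → ℝ := fun t => deriv F t / t

section Calculus

variable {E F : Type*} [NormedAddCommGroup E] [NormedSpace ℝ E]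
  [NormedAddCommGroup F] [InnerProductSpace ℝ F]

theorem HasFDerivAt.norm {g : E → F} {g' : E →L[ℝ] F} {x : E} (hg : HasFDerivAt g g' x)
    (h0 : g x ≠ 0) :
    HasFDerivAt (fun y => ‖g y‖) (‖g x‖⁻¹ • (innerSL ℝ (g x)).comp g') x := by
  have hsq : HasDerivAt Real.sqrt (1 / (2 * Real.sqrt (‖g x‖ ^ 2))) (‖g x‖ ^ 2) :=
    Real.hasDerivAt_sqrt (by positivity)
  have hnorm : (fun y => ‖g y‖) = Real.sqrt ∘ fun y => ‖g y‖ ^ 2 := by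
    funext y
    simp [Real.sqrt_sq (norm_nonneg _)]
  rw [hnorm]
  refine (hsq.comp_hasFDerivAt x hg.norm_sq).congr_fderiv ?_
  ext v
  simp only [Real.sqrt_sq (norm_nonneg _), one_div, mul_inv_rev, smul_apply,
    ContinuousLinearMap.comp_apply, coe_innerSL_apply, nsmul_eq_mul, Nat.cast_ofNat, smul_eq_mul]
  field_simp

variable [CompleteSpace F]

theorem gradient_comp {f : ℝ → ℝ} {u : F → ℝ} {y : F} (hf : DifferentiableAt ℝ f (u y))
    (hu : DifferentiableAt ℝ u y) :
    gradient (f ∘ u) y = deriv f (u y) • gradient u y := by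
  rw [gradient, (hf.hasDerivAt.comp_hasFDerivAt y hu.hasFDerivAt).fderiv, map_smul]
  rfl

theorem ContDiffAt.differentiableAt_gradient {u : F → ℝ} {x : F} (hu : ContDiffAt ℝ 2 u x) :
    DifferentiableAt ℝ (gradient u) x :=
  (InnerProductSpace.toDual ℝ F).symm.differentiableAt.comp x
    ((hu.fderiv_right (m := 1) le_rfl).differentiableAt one_ne_zero)

end Calculus

theorem hasDerivAt_Hfun {F : ℝ → ℝ} {Q t : ℝ} (hF : HasDerivAt (deriv F) Q t) (ht : t ≠ 0) :
    HasDerivAt (Hfun F) ((Q * t - deriv F t) / t ^ 2) t :=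
  (hF.div (hasDerivAt_id' t) ht).congr_deriv (by rw [mul_one])

section Euclidean

variable {n : ℕ}

theorem ContinuousLinearMap.sum_apply_single_mul (L : EuclideanSpace ℝ (Fin n) →L[ℝ] ℝ)
    (v : EuclideanSpace ℝ (Fin n)) :
    ∑ i, L (EuclideanSpace.single i 1) * v i = L v := by
  conv_rhs => rw [← (EuclideanSpace.basisFun (Fin n) ℝ).sum_repr v]
  simp [mul_comm]

theorem divergence_smul {φ : EuclideanSpace ℝ (Fin n) → ℝ}
    {V : EuclideanSpace ℝ (Fin n) → EuclideanSpace ℝ (Fin n)} {x : EuclideanSpace ℝ (Fin n)}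
    (hφ : DifferentiableAt ℝ φ x) (hV : DifferentiableAt ℝ V x) :
    divergence (fun y => φ y • V y) x = φ x * divergence V x + fderiv ℝ φ x (V x) := by
  simp only [divergence, fderiv_fun_smul hφ hV, add_apply,
    smul_apply, ContinuousLinearMap.smulRight_apply, PiLp.add_apply,
    PiLp.smul_apply, smul_eq_mul, Finset.sum_add_distrib, Finset.mul_sum]
  rw [← (fderiv ℝ φ x).sum_apply_single_mul]

theorem laplacian_eq_divergence_gradient {u : EuclideanSpace ℝ (Fin n) → ℝ}
    {x : EuclideanSpace ℝ (Fin n)} (hu : DifferentiableAt ℝ (gradient u) x) :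
    laplacian u x = divergence (gradient u) x := by
  refine Finset.sum_congr rfl fun i _ => ?_
  have hcoord : (fun y => fderiv ℝ u y (EuclideanSpace.single i 1)) =
      innerSL ℝ (EuclideanSpace.single (𝕜 := ℝ) i 1) ∘ gradient u := by
    ext y
    rw [Function.comp_apply, innerSL_apply_apply, real_inner_comm, inner_gradient_left]
  rw [hcoord, ((innerSL ℝ _).hasFDerivAt.comp x hu.hasFDerivAt).fderiv]
  simp [EuclideanSpace.inner_single_left]

theorem Filter.EventuallyEq.divergence_eq
    {V₁ V₂ : EuclideanSpace ℝ (Fin n) → EuclideanSpace ℝ (Fin n)} {x : EuclideanSpace ℝ (Fin n)}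
    (h : V₁ =ᶠ[𝓝 x] V₂) : divergence V₁ x = divergence V₂ x := by
  simp only [divergence, h.fderiv_eq]

theorem Hfun_norm_gradient_comp_smul {w : EuclideanSpace ℝ (Fin n) → ℝ}
    {y : EuclideanSpace ℝ (Fin n)} (hw : DifferentiableAt ℝ w y) {f : ℝ → ℝ}
    (hf : DifferentiableAt ℝ f (w y)) (hf' : 0 < deriv f (w y)) (F : ℝ → ℝ) :
    Hfun F ‖gradient (f ∘ w) y‖ • gradient (f ∘ w) y =
      (Hfun F (deriv f (w y) * ‖gradient w y‖) * deriv f (w y)) • gradient w y := by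
  rw [gradient_comp hf hw, norm_smul, Real.norm_of_nonneg hf'.le, smul_smul]

theorem divergence_Hfun_gradient_comp {w : EuclideanSpace ℝ (Fin n) → ℝ}
    {x : EuclideanSpace ℝ (Fin n)} (hw : ContDiffAt ℝ 2 w x) (hharm : laplacian w x = 0)
    (hgrad : gradient w x ≠ 0) {f : ℝ → ℝ} (hf : ContDiff ℝ 2 f) (hf' : ∀ t, 0 < deriv f t)
    {F : ℝ → ℝ} {H' : ℝ} (hH : HasDerivAt (Hfun F) H' (deriv f (w x) * ‖gradient w x‖)) :
    divergence (fun y => Hfun F ‖gradient (f ∘ w) y‖ • gradient (f ∘ w) y) x =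
      Hfun F (deriv f (w x) * ‖gradient w x‖) * deriv (deriv f) (w x) * ‖gradient w x‖ ^ 2 +
        H' * deriv f (w x) * (deriv (deriv f) (w x) * ‖gradient w x‖ ^ 3 +
          deriv f (w x) * inftyLaplacian w x / ‖gradient w x‖) := by
  set φ : EuclideanSpace ℝ (Fin n) → ℝ :=
    fun y => Hfun F (deriv f (w y) * ‖gradient w y‖) * deriv f (w y)
  have hev : (fun y => Hfun F ‖gradient (f ∘ w) y‖ • gradient (f ∘ w) y) =ᶠ[𝓝 x]
      fun y => φ y • gradient w y := by
    filter_upwards [hw.eventually (by simp)] with y hy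
    exact Hfun_norm_gradient_comp_smul (hy.differentiableAt two_ne_zero)
      (hf.differentiable two_ne_zero _) (hf' _) F
  have hw' : HasFDerivAt w (fderiv ℝ w x) x := (hw.differentiableAt two_ne_zero).hasFDerivAt
  have hA : HasFDerivAt (gradient w) (fderiv ℝ (gradient w) x) x :=
    hw.differentiableAt_gradient.hasFDerivAt
  have hdf : HasFDerivAt (fun y => deriv f (w y)) (deriv (deriv f) (w x) • fderiv ℝ w x) x :=
    (hf.differentiable_deriv_two _).hasDerivAt.comp_hasFDerivAt x hw'
  have hτ : HasFDerivAt (fun y => deriv f (w y) * ‖gradient w y‖) _ x :=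
    hdf.fun_mul (hA.norm hgrad)
  have hφ : HasFDerivAt φ _ x := (hH.comp_hasFDerivAt (h₂ := Hfun F) x hτ).fun_mul hdf
  rw [hev.divergence_eq, divergence_smul hφ.differentiableAt hA.differentiableAt,
    ← laplacian_eq_divergence_gradient hA.differentiableAt, hharm, mul_zero, zero_add, hφ.fderiv]
  have hr : ‖gradient w x‖ ≠ 0 := norm_ne_zero_iff.mpr hgrad
  simp only [Function.comp_apply, smul_add, add_apply, smul_apply, ← inner_gradient_left,
    inner_self_eq_norm_sq_to_K, Real.ringHom_apply, smul_eq_mul, ContinuousLinearMap.comp_apply,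
    coe_innerSL_apply, inftyLaplacian]
  field_simp
  ring

end Euclidean

theorem statement1_general {n : ℕ}
    (D : Set (EuclideanSpace ℝ (Fin n))) (hD : IsOpen D)
    (w : EuclideanSpace ℝ (Fin n) → ℝ) (hw : ContDiffOn ℝ 2 w D)
    (hharm : ∀ x ∈ D, laplacian w x = 0)
    (hgrad : ∀ x ∈ D, gradient w x ≠ 0)
    (f : ℝ → ℝ) (hf : ContDiff ℝ 2 f) (hf' : ∀ t : ℝ, 0 < deriv f t)
    (F : ℝ → ℝ) (hF : ContDiffOn ℝ 2 F (Ici 0))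
    (hF'' : ∀ t > (0:ℝ), 0 < deriv (deriv F) t) :
    ∀ x ∈ D,
      (0 ≤ divergence (fun y => Hfun F ‖gradient (f ∘ w) y‖ • gradient (f ∘ w) y) x ↔
        (deriv F (deriv f (w x) * ‖gradient w x‖) /
            deriv (deriv F) (deriv f (w x) * ‖gradient w x‖) -
              deriv f (w x) * ‖gradient w x‖) *
            ‖gradient w x‖ ^ (-5 : ℤ) * inftyLaplacian w x ≤ deriv (deriv f) (w x)) := by
  intro x hx
  set a := deriv f (w x)
  set b := deriv (deriv f) (w x)
  set r := ‖gradient w x‖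
  set Λ := inftyLaplacian w x
  have hr : 0 < r := norm_pos_iff.mpr (hgrad x hx)
  have ha : 0 < a := hf' _
  have ht : 0 < a * r := mul_pos ha hr
  set Q := deriv (deriv F) (a * r)
  have hQ : 0 < Q := hF'' _ ht
  have hF₂ : HasDerivAt (deriv F) Q (a * r) :=
    ((hF.contDiffAt (Ici_mem_nhds ht)).derivWithin (m := 1) le_rfl).differentiableAt
      one_ne_zero |>.hasDerivAt
  have hformula : Hfun F (a * r) * b * r ^ 2 +
      (Q * (a * r) - deriv F (a * r)) / (a * r) ^ 2 * a * (b * r ^ 3 + a * Λ / r) =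
        Q * r ^ 2 * (b - (deriv F (a * r) / Q - a * r) * r ^ (-5 : ℤ) * Λ) := by
    rw [Hfun, zpow_neg, zpow_ofNat]
    field_simp [ha.ne', hr.ne', hQ.ne']
    ring
  rw [divergence_Hfun_gradient_comp (hw.contDiffAt (hD.mem_nhds hx)) (hharm x hx) (hgrad x hx)
    hf hf' (hasDerivAt_Hfun hF₂ ht.ne'), hformula, mul_nonneg_iff_of_pos_left (by positivity),
    sub_nonneg]

/-- Under the same hypotheses as in the computation of `Δ_H (f∘w)`:
at every point `x ∈ D`, one has `div(H(|∇(f∘w)|)∇(f∘w))(x) ≥ 0` if and only if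
`f''(w(x)) ≥ (F'(f'(w)|∇w|)/F''(f'(w)|∇w|) − f'(w)|∇w|) |∇w|⁻⁵ Δ_∞ w` at `x`. -/
theorem statement1 {n : ℕ} (hn : 2 ≤ n)
    (D : Set (EuclideanSpace ℝ (Fin n))) (hD : IsOpen D)
    (w : EuclideanSpace ℝ (Fin n) → ℝ) (hw : ContDiffOn ℝ 2 w D)
    (hharm : ∀ x ∈ D, laplacian w x = 0)
    (hgrad : ∀ x ∈ D, gradient w x ≠ 0)
    (f : ℝ → ℝ) (hf : ContDiff ℝ 2 f) (hf' : ∀ t : ℝ, 0 < deriv f t)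
    (F : ℝ → ℝ) (hF : ContDiffOn ℝ 2 F (Ici 0))
    (hF' : ∀ t > (0:ℝ), 0 < deriv F t) (hF'' : ∀ t > (0:ℝ), 0 < deriv (deriv F) t) :
    ∀ x ∈ D,
      (0 ≤ divergence (fun y => Hfun F ‖gradient (f ∘ w) y‖ • gradient (f ∘ w) y) x ↔
        (deriv F (deriv f (w x) * ‖gradient w x‖) /
            deriv (deriv F) (deriv f (w x) * ‖gradient w x‖) -
              deriv f (w x) * ‖gradient w x‖) *
            ‖gradient w x‖ ^ (-5 : ℤ) * inftyLaplacian w x ≤ deriv (deriv f) (w x)) :=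
  statement1_general D hD w hw hharm hgrad f hf hf' F hF hF''
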